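/- arXiv:1712.04414 — 5 statements merged into one kernel-verified Lean document; each statement's English description precedes it below -/
import Mathlib

section
/- If α₁ is an integer and β₁ is a rational number with β₁ > 1, and β₂ = 2/(((β₁+i)/(β₁-i))^α₁ - i) - i is well defined (the denominator is nonzero), then β₂ is a real rational number, i.e., β₂ lies in ℚ viewed inside ℂ. -/
/-!
Put `w = ((β₁ + i) / (β₁ - i)) ^ α₁`. Since `β₁` is real, `(β₁ + i) / (β₁ - i)` has modulus one, hence so
does `w`, and `w ↦ 2 / (w - i) - i` (a Cayley-type transform) sends the unit circle minus `i` into `ℝ`.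
On the other hand `β₂` is built from `β₁` and `i` by field operations, so it lies in `ℚ(i)`; and the real
elements of `ℚ(i)` are the rationals.
-/

open Complex ComplexConjugate

def gaussianRationals : Subfield ℂ where
  carrier := {z | ∃ x y : ℚ, z = x + y * I}
  zero_mem' := ⟨0, 0, by simp⟩
  one_mem' := ⟨1, 0, by simp⟩
  add_mem' := by
    rintro _ _ ⟨a, b, rfl⟩ ⟨c, d, rfl⟩
    exact ⟨a + c, b + d, by push_cast; ring⟩
  neg_mem' := by
    rintro _ ⟨a, b, rfl⟩
    exact ⟨-a, -b, by push_cast; ring⟩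
  mul_mem' := by
    rintro _ _ ⟨a, b, rfl⟩ ⟨c, d, rfl⟩
    exact ⟨a * c - b * d, a * d + b * c, by push_cast; linear_combination (b * d : ℂ) * I_sq⟩
  inv_mem' := by
    rintro _ ⟨a, b, rfl⟩
    refine ⟨a / (a ^ 2 + b ^ 2), -b / (a ^ 2 + b ^ 2), ?_⟩
    apply Complex.ext <;>
      simp [inv_re, inv_im, normSq_apply, sq, -Rat.cast_div, -Rat.cast_neg] <;> push_cast <;> ring

theorem I_mem_gaussianRationals : I ∈ gaussianRationals := ⟨0, 1, by simp⟩

theorem exists_ratCast_eq_of_mem_gaussianRationals_of_conj_eq {z : ℂ}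
    (hz : z ∈ gaussianRationals) (hconj : conj z = z) : ∃ q : ℚ, z = q := by
  obtain ⟨x, y, rfl⟩ := hz
  have hy : y = 0 := by
    have h := congrArg im hconj
    simp only [conj_im, add_im, ratCast_im, mul_im, I_re, I_im, ratCast_re] at h
    exact_mod_cast (by linarith : (y : ℝ) = 0)
  exact ⟨x, by simp [hy]⟩

theorem ofReal_add_I_div_ofReal_sub_I_mul_conj (r : ℝ) :
    (r + I) / (r - I) * conj ((r + I) / (r - I)) = 1 := by
  have hne : (r : ℂ) - I ≠ 0 := fun h => by simpa using congrArg im h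
  have hne' : (r : ℂ) + I ≠ 0 := fun h => by simpa using congrArg im h
  simp only [map_div₀, map_add, map_sub, conj_ofReal, conj_I, sub_neg_eq_add]
  field_simp
  ring

theorem zpow_mul_conj_eq_one {w : ℂ} (hw : w * conj w = 1) (n : ℤ) :
    w ^ n * conj (w ^ n) = 1 := by
  rw [map_zpow₀, ← mul_zpow, hw, one_zpow]

theorem conj_two_div_sub_I_sub_I {w : ℂ} (hw : w * conj w = 1) (hwI : w - I ≠ 0) :
    conj (2 / (w - I) - I) = 2 / (w - I) - I := by
  have hconj : conj w + I ≠ 0 := by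
    simpa only [map_sub, conj_I, sub_neg_eq_add] using (map_ne_zero conj).mpr hwI
  simp only [map_sub, map_div₀, map_ofNat, conj_I, sub_neg_eq_add]
  field_simp
  linear_combination (2 * I) * hw + (2 * w - 2 * conj w - 2 * I) * I_sq

theorem beta2_rational_general (α₁ : ℤ) (β₁ : ℚ)
    (hden : (((β₁ : ℂ) + Complex.I) / ((β₁ : ℂ) - Complex.I)) ^ α₁ - Complex.I ≠ 0) :
    ∃ q : ℚ,
      2 / ((((β₁ : ℂ) + Complex.I) / ((β₁ : ℂ) - Complex.I)) ^ α₁ - Complex.I) - Complex.I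
        = (q : ℂ) := by
  set w := (((β₁ : ℂ) + I) / ((β₁ : ℂ) - I)) ^ α₁
  have hβ : (β₁ : ℂ) ∈ gaussianRationals := SubfieldClass.ratCast_mem _ β₁
  have hmem : 2 / (w - I) - I ∈ gaussianRationals := by
    have hI := I_mem_gaussianRationals
    have hw : w ∈ gaussianRationals :=
      zpow_mem (div_mem (add_mem hβ hI) (sub_mem hβ hI)) α₁
    exact sub_mem (div_mem (ofNat_mem _ 2) (sub_mem hw hI)) hI
  have hunit : w * conj w = 1 := by
    refine zpow_mul_conj_eq_one ?_ α₁
    simpa only [ofReal_ratCast] using ofReal_add_I_div_ofReal_sub_I_mul_conj β₁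
  exact exists_ratCast_eq_of_mem_gaussianRationals_of_conj_eq hmem
    (conj_two_div_sub_I_sub_I hunit hden)

theorem beta2_rational (α₁ : ℤ) (β₁ : ℚ) (h₁ : 1 < β₁)
    (hden : (((β₁ : ℂ) + Complex.I) / ((β₁ : ℂ) - Complex.I)) ^ α₁ - Complex.I ≠ 0) :
    ∃ q : ℚ,
      2 / ((((β₁ : ℂ) + Complex.I) / ((β₁ : ℂ) - Complex.I)) ^ α₁ - Complex.I) - Complex.I
        = (q : ℂ) :=
  beta2_rational_general α₁ β₁ hden
end

section
/- Define the sequence c₁ = √2 and c_{k+1} = √(2 + c_k). Then for every integer k ≥ 2, π/4 = 2^{k-1} · arctan(√(2 - c_{k-1}) / c_k). -/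
open Real

lemma pi_div_pow_pos (n : ℕ) : 0 < π / 2 ^ n :=
  div_pos Real.pi_pos (by positivity)

lemma pi_div_pow_le (n : ℕ) (hn : 1 ≤ n) : π / 2 ^ n ≤ π / 2 := by
  apply div_le_div_of_nonneg_left Real.pi_pos.le (by norm_num)
  calc (2:ℝ) = 2 ^ 1 := by norm_num
  _ ≤ 2 ^ n := by exact pow_le_pow_right₀ (by norm_num) hn

lemma c_eq (c : ℕ → ℝ) (hc1 : c 1 = Real.sqrt 2)
    (hc : ∀ k, c (k + 1) = Real.sqrt (2 + c k)) :
    ∀ k : ℕ, 1 ≤ k → c k = 2 * Real.cos (π / 2 ^ (k + 1)) := by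
  intro k hk
  induction k, hk using Nat.le_induction with
  | base =>
    rw [hc1]
    norm_num [Real.cos_pi_div_four]
    ring
  | succ k hk ih =>
    rw [hc, ih]
    have hθ : π / 2 ^ (k + 1) = 2 * (π / 2 ^ (k + 1 + 1)) := by
      rw [pow_succ]; ring
    have hcn : 0 ≤ Real.cos (π / 2 ^ (k + 1 + 1)) := by
      apply Real.cos_nonneg_of_mem_Icc
      constructor
      · linarith [pi_div_pow_pos (k+1+1), Real.pi_pos]
      · exact pi_div_pow_le _ (by omega)
    have : 2 + 2 * Real.cos (π / 2 ^ (k + 1)) = (2 * Real.cos (π / 2 ^ (k + 1 + 1))) ^ 2 := by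
      rw [hθ, Real.cos_two_mul]; ring
    rw [this, Real.sqrt_sq (by positivity)]

theorem pi_quarter_nested_radicals (c : ℕ → ℝ) (hc1 : c 1 = Real.sqrt 2)
    (hc : ∀ k, c (k + 1) = Real.sqrt (2 + c k)) :
    ∀ k : ℕ, 2 ≤ k →
      π / 4 = 2 ^ (k - 1) * Real.arctan (Real.sqrt (2 - c (k - 1)) / c k) := by
  intro k hk
  obtain ⟨m, rfl⟩ : ∃ m, k = m + 2 := ⟨k - 2, by omega⟩
  have h1 : m + 2 - 1 = m + 1 := by omega
  rw [h1, c_eq c hc1 hc (m+1) (by omega), c_eq c hc1 hc (m+2) (by omega)]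
  set θ := π / 2 ^ (m + 3) with hθdef
  have hθpos : 0 < θ := pi_div_pow_pos _
  have hθlt : θ ≤ π / 2 := pi_div_pow_le _ (by omega)
  have h2 : π / 2 ^ (m + 1 + 1) = 2 * θ := by
    rw [hθdef, show m+3 = m+2+1 by ring, pow_succ]; ring
  have hsn : 0 ≤ Real.sin θ := Real.sin_nonneg_of_nonneg_of_le_pi hθpos.le
    (by linarith [Real.pi_pos])
  have h3 : 2 - 2 * Real.cos (π / 2 ^ (m + 1 + 1)) = (2 * Real.sin θ) ^ 2 := by
    rw [h2, Real.cos_two_mul, Real.cos_sq']; ring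
  rw [h3, Real.sqrt_sq (by positivity)]
  have hθlt' : θ < π / 2 := by
    rw [hθdef]
    apply div_lt_div_of_pos_left Real.pi_pos (by norm_num)
    calc (2:ℝ) < 2^2 := by norm_num
    _ ≤ 2 ^ (m+3) := by apply pow_le_pow_right₀ (by norm_num); omega
  have hcpos : 0 < Real.cos θ := Real.cos_pos_of_mem_Ioo
    ⟨by linarith [Real.pi_pos], hθlt'⟩
  have : 2 * Real.sin θ / (2 * Real.cos θ) = Real.tan θ := by
    rw [Real.tan_eq_sin_div_cos]; field_simp
  rw [this, Real.arctan_tan (by linarith) hθlt']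
  rw [hθdef, show m + 3 = m + 1 + 2 by ring, pow_add]
  field_simp
  ring
end

section
/- π/4 = 32·arctan(1/40) − arctan(38035138859000075702655846657186322249216830232319 / 2634699316100146880926635665506082395762836079845121). -/
open Real

private lemma arctan_double {x : ℝ} (h : x * x < 1) :
    2 * Real.arctan x = Real.arctan ((x + x) / (1 - x * x)) := by
  rw [two_mul, Real.arctan_add h]

theorem machin_like_formula_k6 :
    π / 4 = 32 * Real.arctan (1 / 40) -
      Real.arctan (38035138859000075702655846657186322249216830232319 / 2634699316100146880926635665506082395762836079845121) := by
  have h1 : 2 * Real.arctan (1/40) = Real.arctan (80/1599) := by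
    rw [arctan_double (by norm_num)]; norm_num
  have h2 : 2 * Real.arctan (80/1599) = Real.arctan (255840/2550401) := by
    rw [arctan_double (by norm_num)]; norm_num
  have h3 : 2 * Real.arctan (255840/2550401) = Real.arctan (1304989183680/6439091155201) := by
    rw [arctan_double (by norm_num)]; norm_num
  have h4 : 2 * Real.arctan (1304989183680/6439091155201) =
      Real.arctan (16805888620533722352639360/39758898135465955891008001) := by
    rw [arctan_double (by norm_num)]; norm_num
  have h5 : 2 * Real.arctan (16805888620533722352639360/39758898135465955891008001) =
      Real.arctan (1336367227479573478314645756081634359006026455038720/1298332088620573402611989909424448036756809624806401) := by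
    rw [arctan_double (by norm_num)]; norm_num
  have key : Real.arctan (38035138859000075702655846657186322249216830232319 / 2634699316100146880926635665506082395762836079845121)
      + Real.arctan 1
      = Real.arctan (1336367227479573478314645756081634359006026455038720/1298332088620573402611989909424448036756809624806401) := by
    rw [Real.arctan_add (by norm_num)]; norm_num
  have : (32 : ℝ) * Real.arctan (1/40)
      = Real.arctan (1336367227479573478314645756081634359006026455038720/1298332088620573402611989909424448036756809624806401) := by
    rw [← h5, ← h4, ← h3, ← h2, ← h1]; ring
  rw [this, ← key, Real.arctan_one]; ring
end

section
/- For the two-term formula with k = 6 and β₁ = 40: the complex number 2/(((40+i)/(40−i))^{32} + i) + i is real and negative, and equals −38035138859000075702655846657186322249216830232319 / 2634699316100146880926635665506082395762836079845121. -/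
/-! Writing `p = (40 + i)^32`, the power in question is `p / p̄`, and `p + i p̄ = (re p + im p)(1 + i)`
collapses `2 / (p / p̄ + i) + i` to the real number `(re p - im p) / (re p + im p)`. Only `p`
itself has to be computed. -/

open Complex ComplexConjugate

theorem two_div_div_conj_add_I_add_I (p : ℂ) (h : p.re + p.im ≠ 0) :
    2 / (p / conj p + I) + I = ((p.re - p.im) / (p.re + p.im) : ℝ) := by
  obtain ⟨a, b, rfl⟩ : ∃ a b : ℝ, p = a + b * I := ⟨p.re, p.im, (re_add_im p).symm⟩
  have hconj : conj ((a : ℂ) + b * I) = a - b * I := by simp [sub_eq_add_neg]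
  simp only [hconj, add_re, ofReal_re, mul_re, I_re, ofReal_im, I_im, add_im, mul_im,
    mul_zero, sub_zero, mul_one, zero_add, add_zero] at h ⊢
  have hs : (a + b : ℂ) ≠ 0 := by exact_mod_cast h
  have hq : (a : ℂ) - b * I ≠ 0 := by
    intro h0
    exact h (by simpa using congrArg (fun z => z.re - z.im) h0)
  have h1I : (1 : ℂ) + I ≠ 0 := fun h0 => by simpa using congrArg re h0
  have hsum : (a + b * I) / (a - b * I) + I = (a + b) * (1 + I) / (a - b * I) := by
    rw [div_add' _ _ _ hq]
    congr 1
    linear_combination (-b) * I_sq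
  rw [hsum]
  push_cast
  field_simp
  linear_combination (a + b) * I_sq

theorem forty_add_I_pow_32 :
    ((40 : ℂ) + I) ^ 32 = ⟨1298332088620573402611989909424448036756809624806401,
      1336367227479573478314645756081634359006026455038720⟩ := by
  apply Complex.ext <;> norm_num [pow_succ]

theorem beta2_value_k6 :
    (2 / ((((40 : ℂ) + Complex.I) / ((40 : ℂ) - Complex.I)) ^ (32 : ℕ) + Complex.I)
        + Complex.I).im = 0 ∧
    (2 / ((((40 : ℂ) + Complex.I) / ((40 : ℂ) - Complex.I)) ^ (32 : ℕ) + Complex.I)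
        + Complex.I).re < 0 ∧
    2 / ((((40 : ℂ) + Complex.I) / ((40 : ℂ) - Complex.I)) ^ (32 : ℕ) + Complex.I)
        + Complex.I
      = -((38035138859000075702655846657186322249216830232319 : ℂ) / (2634699316100146880926635665506082395762836079845121 : ℂ)) := by
  have hconj : (40 : ℂ) - I = conj (40 + I) := by
    rw [map_add, conj_I, map_ofNat, sub_eq_add_neg]
  have hvalue : 2 / (((40 + I) / (40 - I)) ^ 32 + I) + I =
      ((-(38035138859000075702655846657186322249216830232319 /
        2634699316100146880926635665506082395762836079845121) : ℝ) : ℂ) := by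
    rw [hconj, div_pow, ← map_pow, two_div_div_conj_add_I_add_I _ (by norm_num [forty_add_I_pow_32]),
      forty_add_I_pow_32]
    norm_num
  rw [hvalue, ofReal_im, ofReal_re]
  refine ⟨rfl, by norm_num, by push_cast; rfl⟩
end

section
/- For all real x, arctan(x) = 2·∑_{m=1}^∞ (1/(2m−1)) · g_m(x) / (g_m(x)² + h_m(x)²) whenever x ≠ 0, where g₁ = 2/x, h₁ = 1, g_m = g_{m−1}(1 − 4/x²) + 4h_{m−1}/x, h_m = h_{m−1}(1 − 4/x²) − 4g_{m−1}/x, and g_m(x)² + h_m(x)² ≠ 0 for all m. -/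
/-!
With `w = 1 - 2i/x`, the recurrence is multiplication by `w²` on `g m + i h m`, so
`g m + i h m = i w^(2m-1)` and `g m / (g m² + h m²) = Re (g m + i h m)⁻¹ = Im u^(2m-1)` for
`u = w⁻¹ = x / (x - 2i)`, which lies in the unit disc. The series is therefore
`2 Im artanh u = Im log ((1 + u) / (1 - u))`, and `(1 + u) / (1 - u) = 1 + ix` has argument
`arctan x`.
-/

section

open Complex

theorem Complex.hasSum_odd_pow_div {z : ℂ} (hz : ‖z‖ < 1) :
    HasSum (fun n : ℕ => z ^ (2 * n + 1) / (2 * n + 1)) (log ((1 + z) / (1 - z)) / 2) := by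
  have hzI : ‖-(z * I)‖ < 1 := by rwa [norm_neg, norm_mul, norm_I, mul_one]
  have hterm : ∀ n : ℕ, (-1) ^ n * (-(z * I)) ^ (2 * n + 1) / ↑(2 * n + 1)
      = -I * (z ^ (2 * n + 1) / (2 * n + 1)) := by
    intro n
    have h1 : ((-1 : ℂ) ^ n) * (-1) ^ n = 1 := by rw [← mul_pow]; norm_num
    rw [Odd.neg_pow ⟨n, rfl⟩, mul_pow, pow_succ I, pow_mul, I_sq]
    push_cast
    linear_combination (-z ^ (2 * n + 1) * I / (2 * n + 1)) * h1
  have harctan : arctan (-(z * I)) = -I * (log ((1 + z) / (1 - z)) / 2) := by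
    rw [Complex.arctan.eq_1, neg_mul, mul_assoc, I_mul_I, mul_neg_one, neg_neg]
    ring
  have h := hasSum_arctan hzI
  simp only [hterm, harctan] at h
  exact (hasSum_mul_left_iff (neg_ne_zero.mpr I_ne_zero)).mp h

theorem Complex.arg_one_add_ofReal_mul_I (x : ℝ) : arg (1 + x * I) = Real.arctan x := by
  have hre : 0 < (1 + x * I).re := by simp
  obtain ⟨hlo, hhi⟩ := abs_lt.mp (abs_arg_lt_pi_div_two_iff.mpr (Or.inl hre))
  rw [← Real.arctan_tan hlo hhi, tan_arg]
  simp

theorem Complex.one_lt_norm_one_sub_I_div {x : ℝ} (hx : x ≠ 0) : 1 < ‖1 - 2 * I / x‖ := by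
  simpa using abs_re_lt_norm.mpr (by simpa using hx : (1 - 2 * I / x).im ≠ 0)

theorem Complex.one_add_inv_div_one_sub_inv {x : ℝ} (hx : x ≠ 0) :
    (1 + (1 - 2 * I / x)⁻¹) / (1 - (1 - 2 * I / x)⁻¹) = 1 + x * I := by
  have hx' : (x : ℂ) ≠ 0 := ofReal_ne_zero.mpr hx
  have hw : 1 - 2 * I / x = (x - 2 * I) / x := by field_simp
  have h1 : (x : ℂ) - 2 * I ≠ 0 := by
    intro h0; simpa using congrArg im h0
  rw [hw, inv_div]
  field_simp
  linear_combination (2 * (x : ℂ)) * I_sq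

theorem Real.hasSum_arctan_im_inv_pow {x : ℝ} (hx : x ≠ 0) :
    HasSum (fun n : ℕ => 2 / (2 * n + 1) * ((1 - 2 * I / x)⁻¹ ^ (2 * n + 1)).im)
      (Real.arctan x) := by
  have hu : ‖(1 - 2 * I / x)⁻¹‖ < 1 := by
    rw [norm_inv]; exact inv_lt_one_of_one_lt₀ (one_lt_norm_one_sub_I_div hx)
  have h := hasSum_im ((hasSum_odd_pow_div hu).mul_left 2)
  rw [one_add_inv_div_one_sub_inv hx, mul_div_cancel₀ _ two_ne_zero, Complex.log_im,
    arg_one_add_ofReal_mul_I] at h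
  convert h using 2 with n
  rw [show 2 * ((1 - 2 * I / x)⁻¹ ^ (2 * n + 1) / (2 * n + 1))
      = ((2 / (2 * n + 1) : ℝ) : ℂ) * (1 - 2 * I / x)⁻¹ ^ (2 * n + 1) by push_cast; ring,
    im_ofReal_mul]

theorem Complex.re_inv_I_mul_pow (w : ℂ) (k : ℕ) : ((I * w ^ k)⁻¹).re = (w⁻¹ ^ k).im := by
  rw [mul_inv, inv_I, inv_pow]
  simp

theorem add_mul_I_eq_I_mul_pow_of_recurrence {x : ℝ} {g h : ℕ → ℝ}
    (hg1 : g 1 = 2 / x) (hh1 : h 1 = 1)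
    (hg : ∀ m, 2 ≤ m → g m = g (m - 1) * (1 - 4 / x ^ 2) + 4 * h (m - 1) / x)
    (hh : ∀ m, 2 ≤ m → h m = h (m - 1) * (1 - 4 / x ^ 2) - 4 * g (m - 1) / x) (n : ℕ) :
    (g (n + 1) : ℂ) + h (n + 1) * I = I * (1 - 2 * I / x) ^ (2 * n + 1) := by
  induction n with
  | zero =>
    rw [hg1, hh1]
    push_cast
    linear_combination (2 / (x : ℂ)) * I_sq
  | succ n ih =>
    rw [hg (n + 1 + 1) (by omega), hh (n + 1 + 1) (by omega), Nat.add_sub_cancel,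
      show 2 * (n + 1) + 1 = 2 * n + 1 + 2 by ring, pow_add, ← mul_assoc, ← ih]
    push_cast
    linear_combination
      (-(4 * g (n + 1) / x ^ 2 - 4 * h (n + 1) / x + 4 * h (n + 1) * I / x ^ 2) : ℂ) * I_sq

end

theorem arctan_gh_series_general (x : ℝ) (hx : x ≠ 0) (g h : ℕ → ℝ)
    (hg1 : g 1 = 2 / x) (hh1 : h 1 = 1)
    (hg : ∀ m, 2 ≤ m → g m = g (m - 1) * (1 - 4 / x ^ 2) + 4 * h (m - 1) / x)
    (hh : ∀ m, 2 ≤ m → h m = h (m - 1) * (1 - 4 / x ^ 2) - 4 * g (m - 1) / x) :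
    HasSum
      (fun m : ℕ =>
        2 * (1 / (2 * (m + 1 : ℝ) - 1)) * (g (m + 1) / (g (m + 1) ^ 2 + h (m + 1) ^ 2)))
      (Real.arctan x) := by
  convert Real.hasSum_arctan_im_inv_pow hx using 2 with n
  have hterm : g (n + 1) / (g (n + 1) ^ 2 + h (n + 1) ^ 2)
      = ((1 - 2 * Complex.I / x)⁻¹ ^ (2 * n + 1)).im := by
    rw [← Complex.re_inv_I_mul_pow, ← add_mul_I_eq_I_mul_pow_of_recurrence hg1 hh1 hg hh,
      Complex.inv_re, Complex.normSq_add_mul_I]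
    simp
  rw [hterm]
  ring

theorem arctan_gh_series (x : ℝ) (hx : x ≠ 0) (g h : ℕ → ℝ)
    (hg1 : g 1 = 2 / x) (hh1 : h 1 = 1)
    (hg : ∀ m, 2 ≤ m → g m = g (m - 1) * (1 - 4 / x ^ 2) + 4 * h (m - 1) / x)
    (hh : ∀ m, 2 ≤ m → h m = h (m - 1) * (1 - 4 / x ^ 2) - 4 * g (m - 1) / x)
    (hne : ∀ m, 1 ≤ m → g m ^ 2 + h m ^ 2 ≠ 0) :
    HasSum
      (fun m : ℕ =>
        2 * (1 / (2 * (m + 1 : ℝ) - 1)) * (g (m + 1) / (g (m + 1) ^ 2 + h (m + 1) ^ 2)))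
      (Real.arctan x) :=
  arctan_gh_series_general x hx g h hg1 hh1 hg hh
end
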